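/- In the smooth RCSN setting, suppose φ is bounded below on E, that x̄ is an accumulation point of (x_k), and that φ satisfies the Kurdyka–Łojasiewicz property at x̄: there exist η > 0 and a continuous concave function ψ : [0,η] → [0,∞) with ψ(0) = 0, ψ differentiable with ψ' > 0 on (0,η), such that ψ'(φ(x) − φ(x̄)) · ‖∇φ(x)‖ ≥ 1 for all x with ‖x − x̄‖ ≤ η and φ(x̄) < φ(x) < φ(x̄) + η. Then Σ_{k=1}^∞ ‖x_{k+1} − x_k‖ < ∞, the whole sequence (x_k) converges to x̄, and ∇φ(x̄) = 0. -/

import Mathlib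

/-!
Armijo's rule together with `⟪∇φ(x k), d k⟫ ≤ -ζ ‖d k‖²` gives the sufficient decrease
`φ (x (k+1)) + σζ ‖x (k+1) - x k‖ ‖d k‖ ≤ φ (x k)`, and near `x̄` the Newton-type equation for
`d k` gives `‖∇φ (x k)‖ ≤ C ‖d k‖`. So `φ (x k)` decreases strictly to `φ x̄`, and the KL
inequality with the concavity of `ψ` turns the two estimates into
`(σζ / C) ‖x (k+1) - x k‖ ≤ ψ (φ (x k) - φ x̄) - ψ (φ (x (k+1)) - φ x̄)` while `x k` is near `x̄`.
Started late enough on the convergent subsequence, this telescoping bound keeps the iterates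
near `x̄` forever, so the steps are summable and `x k → x̄`. Finally, local Lipschitz continuity
of `∇φ` keeps the backtracked step sizes away from `0`, whence `d k → 0` and `∇φ x̄ = 0`.
-/

open scoped RealInnerProductSpace
open Filter Topology

theorem summable_norm_succ_sub_of_le_sub {E : Type*} [SeminormedAddCommGroup E]
    {x : ℕ → E} {u : ℕ → ℝ} {xb : E} {r : ℝ} (K : ℕ) (hu : ∀ k ≥ K, 0 ≤ u k)
    (hstep : ∀ k ≥ K, x k ∈ Metric.closedBall xb r → ‖x (k + 1) - x k‖ ≤ u k - u (k + 1))
    (hK : dist (x K) xb + u K ≤ r) :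
    Summable fun k => ‖x (k + 1) - x k‖ := by
  have hball : ∀ k ≥ K, dist (x k) xb + u k ≤ r := by
    intro k hk
    induction k, hk using Nat.le_induction with
    | base => exact hK
    | succ k hk ih =>
      have hk' := hstep k hk (Metric.mem_closedBall.2 (by linarith [hu k hk]))
      have := dist_triangle (x (k + 1)) (x k) xb
      rw [dist_eq_norm (x (k + 1)) (x k)] at this
      linarith
  have hstep' : ∀ k ≥ K, ‖x (k + 1) - x k‖ ≤ u k - u (k + 1) := fun k hk =>
    hstep k hk (Metric.mem_closedBall.2 (by linarith [hball k hk, hu k hk]))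
  refine (summable_nat_add_iff K).1 <|
    summable_of_sum_range_le (c := u K) (fun _ => norm_nonneg _) fun n => ?_
  calc ∑ i ∈ Finset.range n, ‖x (i + K + 1) - x (i + K)‖
      ≤ ∑ i ∈ Finset.range n, (u (i + K) - u (i + K + 1)) :=
        Finset.sum_le_sum fun i _ => hstep' _ (Nat.le_add_left K i)
    _ = u K - u (n + K) := by
      simpa [Nat.add_right_comm _ 1 K] using Finset.sum_range_sub' (fun i => u (i + K)) n
    _ ≤ u K := sub_le_self _ (hu _ (Nat.le_add_left K n))

theorem StrictAnti.tendsto_and_lt_of_tendsto_comp {f : ℕ → ℝ} (hf : StrictAnti f)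
    {s : ℕ → ℕ} (hs : StrictMono s) {L : ℝ} (hfs : Tendsto (f ∘ s) atTop (𝓝 L)) :
    Tendsto f atTop (𝓝 L) ∧ ∀ k, L < f k := by
  have hlim := (tendsto_iff_tendsto_subseq_of_antitone hf.antitone hs.tendsto_atTop).2 hfs
  exact ⟨hlim, fun k => (hf.antitone.le_of_tendsto hlim (k + 1)).trans_lt (hf k.lt_succ_self)⟩

theorem norm_le_mul_of_apply_add_smul_eq_neg {E : Type*} [SeminormedAddCommGroup E]
    [NormedSpace ℝ E] {A : E →L[ℝ] E} {ρ ρmax : ℝ} {d w : E} (hρ : ρ ∈ Set.Icc 0 ρmax)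
    (h : A d + ρ • d = -w) : ‖w‖ ≤ (‖A‖ + ρmax) * ‖d‖ := by
  rw [← norm_neg w, ← h, add_mul]
  refine (norm_add_le _ _).trans (add_le_add (A.le_opNorm d) ?_)
  rw [norm_smul, Real.norm_of_nonneg hρ.1]
  exact mul_le_mul_of_nonneg_right hρ.2 (norm_nonneg d)

theorem rcsn_norm_succ_sub {E : Type*} [SeminormedAddCommGroup E] [NormedSpace ℝ E]
    {x d : ℕ → E} {τ : ℕ → ℝ} (hτpos : ∀ k, 0 < τ k) (hupd : ∀ k, x (k + 1) = x k + τ k • d k)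
    (k : ℕ) : ‖x (k + 1) - x k‖ = τ k * ‖d k‖ := by
  rw [hupd, add_sub_cancel_left, norm_smul, Real.norm_of_nonneg (hτpos k).le]

section InnerProductSpace

variable {E : Type*} [NormedAddCommGroup E] [InnerProductSpace ℝ E] [CompleteSpace E]

theorem gradient_fun_sub {f g : E → ℝ} (hf : Differentiable ℝ f) (hg : Differentiable ℝ g) :
    gradient (fun y => f y - g y) = gradient f - gradient g := by
  ext y
  simp only [gradient, fderiv_fun_sub (hf y) (hg y), map_sub, Pi.sub_apply]

theorem ContDiff.gradient {g : E → ℝ} {n : WithTop ℕ∞} (hg : ContDiff ℝ (n + 1) g) :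
    ContDiff ℝ n (gradient g) :=
  (InnerProductSpace.toDual ℝ E).symm.contDiff.comp (hg.fderiv_right le_rfl)

theorem Differentiable.hasDerivAt_comp_add_smul {φ : E → ℝ} (hφ : Differentiable ℝ φ)
    (x d : E) (t : ℝ) :
    HasDerivAt (fun t : ℝ => φ (x + t • d)) ⟪gradient φ (x + t • d), d⟫ t := by
  have hline : HasDerivAt (fun t : ℝ => x + t • d) d t := by
    simpa using ((hasDerivAt_id t).smul_const d).const_add x
  simpa [InnerProductSpace.toDual_apply_apply, Function.comp_def] using
    (hφ _).hasGradientAt.hasFDerivAt.comp_hasDerivAt t hline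

open Set in
theorem mul_norm_sub_le_sub_of_KL {φ : E → ℝ} {ψ ψ' : ℝ → ℝ} {η a C v : ℝ} {xb y y' : E}
    (hψconc : ConcaveOn ℝ (Icc 0 η) ψ)
    (hψderiv : ∀ t ∈ Ioo (0 : ℝ) η, HasDerivAt ψ (ψ' t) t ∧ 0 < ψ' t)
    (hKL : 1 ≤ ψ' (φ y - φ xb) * ‖gradient φ y‖) (hgrad : ‖gradient φ y‖ ≤ C * v)
    (hdec : φ y' + a * (‖y' - y‖ * v) ≤ φ y) (hxb : φ xb < φ y') (hy' : φ y' < φ y)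
    (hη : φ y < φ xb + η) (ha : 0 ≤ a) (hC : 0 < C) :
    a / C * ‖y' - y‖ ≤ ψ (φ y - φ xb) - ψ (φ y' - φ xb) := by
  set p := φ y - φ xb
  set q := φ y' - φ xb
  obtain ⟨hψ', hψ'pos⟩ := hψderiv p ⟨by linarith, by linarith⟩
  have htangent : ψ' p * (p - q) ≤ ψ p - ψ q := by
    have := hψconc.le_slope_of_hasDerivAt (x := q) ⟨by linarith, by linarith⟩
      ⟨by linarith, by linarith⟩ (by linarith) hψ'
    rwa [slope_def_field, le_div_iff₀ (by linarith)] at this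
  have hℓ : 0 ≤ a / C * ‖y' - y‖ := by positivity
  calc a / C * ‖y' - y‖ ≤ a / C * ‖y' - y‖ * (ψ' p * ‖gradient φ y‖) :=
        le_mul_of_one_le_right hℓ hKL
    _ ≤ a / C * ‖y' - y‖ * (ψ' p * (C * v)) := by gcongr
    _ = ψ' p * (a * (‖y' - y‖ * v)) := by field_simp
    _ ≤ ψ' p * (p - q) := by gcongr; linarith
    _ ≤ ψ p - ψ q := htangent

open Metric Set in
theorem summable_norm_succ_sub_of_KL {φ : E → ℝ} (hφ : Continuous φ)
    {x : ℕ → E} {v : ℕ → ℝ} {a C r : ℝ} {xb : E} (ha : 0 < a) (hC : 0 < C) (hr : 0 < r)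
    (hdec : ∀ k, φ (x (k + 1)) + a * (‖x (k + 1) - x k‖ * v k) ≤ φ (x k))
    (hstrict : StrictAnti fun k => φ (x k))
    (hgrad : ∀ k, x k ∈ closedBall xb r → ‖gradient φ (x k)‖ ≤ C * v k)
    {s : ℕ → ℕ} (hs : StrictMono s) (hxs : Tendsto (fun j => x (s j)) atTop (𝓝 xb))
    {η : ℝ} (hη : 0 < η) {ψ ψ' : ℝ → ℝ} (hψcont : ContinuousOn ψ (Icc 0 η))
    (hψconc : ConcaveOn ℝ (Icc 0 η) ψ) (hψ0 : ψ 0 = 0)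
    (hψnonneg : ∀ t ∈ Icc (0 : ℝ) η, 0 ≤ ψ t)
    (hψderiv : ∀ t ∈ Ioo (0 : ℝ) η, HasDerivAt ψ (ψ' t) t ∧ 0 < ψ' t)
    (hKL : ∀ y : E, ‖y - xb‖ ≤ η → φ xb < φ y → φ y < φ xb + η →
      1 ≤ ψ' (φ y - φ xb) * ‖gradient φ y‖) :
    Summable fun k => ‖x (k + 1) - x k‖ := by
  obtain ⟨hlim, hgt⟩ := hstrict.tendsto_and_lt_of_tendsto_comp hs ((hφ.tendsto xb).comp hxs)
  replace hlim : Tendsto (fun k => φ (x k) - φ xb) atTop (𝓝 0) := by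
    simpa using hlim.sub_const (φ xb)
  set ρ := min r η
  set c := a / C
  have hc : 0 < c := div_pos ha hC
  have hρ : 0 < ρ := lt_min hr hη
  have hψlim : Tendsto (fun k => ψ (φ (x k) - φ xb)) atTop (𝓝 0) := by
    rw [← hψ0]
    refine (hψcont 0 ⟨le_rfl, hη.le⟩).tendsto.comp (tendsto_nhdsWithin_iff.2 ⟨hlim, ?_⟩)
    filter_upwards [hlim.eventually (gt_mem_nhds hη)] with k hk
    exact ⟨(sub_pos.2 (hgt k)).le, hk.le⟩
  -- Start the trapping argument late on the subsequence, near `xb` and where `ψ` is small.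
  obtain ⟨j, hxj, hψj, hηj⟩ : ∃ j, dist (x (s j)) xb < ρ / 2 ∧
      ψ (φ (x (s j)) - φ xb) < c * (ρ / 2) ∧ φ (x (s j)) - φ xb < η :=
    ((hxs.eventually (ball_mem_nhds xb (half_pos hρ))).and (hs.tendsto_atTop.eventually
      ((hψlim.eventually (gt_mem_nhds (by positivity))).and
        (hlim.eventually (gt_mem_nhds hη))))).exists
  have hη' : ∀ k ≥ s j, φ (x k) < φ xb + η := fun k hk => by
    linarith [hstrict.antitone hk]
  refine summable_norm_succ_sub_of_le_sub (xb := xb) (r := ρ)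
    (u := fun k => ψ (φ (x k) - φ xb) / c) (s j)
    (fun k hk => div_nonneg (hψnonneg _ ⟨(sub_pos.2 (hgt k)).le, by linarith [hη' k hk]⟩) hc.le)
    (fun k hk hxk => ?_) ?_
  · rw [← sub_div, le_div_iff₀ hc, mul_comm]
    exact mul_norm_sub_le_sub_of_KL hψconc hψderiv
      (hKL _ ((mem_closedBall_iff_norm.1 hxk).trans (min_le_right _ _)) (hgt k) (hη' k hk))
      (hgrad k (closedBall_subset_closedBall (min_le_left _ _) hxk)) (hdec k) (hgt (k + 1))
      (hstrict k.lt_succ_self) (hη' k hk) ha.le hC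
  · rw [← le_sub_iff_add_le', div_le_iff₀ hc]
    nlinarith

theorem one_sub_mul_lt_mul_of_armijo_fails {φ : E → ℝ} (hφ : Differentiable ℝ φ)
    {s : Set E} (hs : Convex ℝ s) {K : NNReal} (hK : LipschitzOnWith K (gradient φ) s)
    {x d : E} {σ ζ T : ℝ} (hσ : σ ≤ 1) (hT : 0 < T) (hx : x ∈ s)
    (hxT : x + T • d ∈ s) (hdesc : ⟪gradient φ x, d⟫ ≤ -ζ * ‖d‖ ^ 2)
    (hfail : φ x + σ * T * ⟪gradient φ x, d⟫ < φ (x + T • d)) :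
    (1 - σ) * ζ < K * T := by
  obtain ⟨ξ, hξ, hmvt⟩ := exists_hasDerivAt_eq_slope (fun t : ℝ => φ (x + t • d)) _ hT
    (fun t _ => (hφ.hasDerivAt_comp_add_smul x d t).continuousAt.continuousWithinAt)
    (fun t _ => hφ.hasDerivAt_comp_add_smul x d t)
  simp only [zero_smul, add_zero, sub_zero] at hmvt
  have hξs : x + ξ • d ∈ s := by
    have := hs.add_smul_mem hx hxT ⟨div_nonneg hξ.1.le hT.le, (div_le_one hT).2 hξ.2.le⟩
    rwa [smul_smul, div_mul_cancel₀ _ hT.ne'] at this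
  have hlip : ⟪gradient φ (x + ξ • d) - gradient φ x, d⟫ ≤ K * T * ‖d‖ ^ 2 :=
    calc ⟪gradient φ (x + ξ • d) - gradient φ x, d⟫
        ≤ ‖gradient φ (x + ξ • d) - gradient φ x‖ * ‖d‖ := real_inner_le_norm _ _
      _ ≤ K * ‖(x + ξ • d) - x‖ * ‖d‖ := by
        gcongr; exact lipschitzOnWith_iff_norm_sub_le.1 hK hξs hx
      _ = K * ξ * ‖d‖ ^ 2 := by
        rw [add_sub_cancel_left, norm_smul, Real.norm_of_nonneg hξ.1.le]; ring
      _ ≤ K * T * ‖d‖ ^ 2 := by gcongr; exact hξ.2.le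
  have hslope : σ * ⟪gradient φ x, d⟫ < ⟪gradient φ (x + ξ • d), d⟫ := by
    rw [hmvt, lt_div_iff₀ hT]; linarith
  rw [inner_sub_left] at hlip
  have hkey : (1 - σ) * ζ * ‖d‖ ^ 2 < K * T * ‖d‖ ^ 2 := by
    nlinarith [mul_le_mul_of_nonneg_left hdesc (sub_nonneg.2 hσ)]
  exact lt_of_mul_lt_mul_right hkey (sq_nonneg _)

-- `K + 1` rather than `K`: the Lipschitz constant may be `0`, and `x / 0 = 0`.
theorem min_le_of_backtracking {φ : E → ℝ} (hφ : Differentiable ℝ φ)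
    {s : Set E} (hs : Convex ℝ s) {K : NNReal} (hK : LipschitzOnWith K (gradient φ) s)
    {x d : E} {σ β ζ tmin τ : ℝ} (hσ : σ ≤ 1) (hβ : 0 < β) (hτ : 0 < τ) (hx : x ∈ s)
    (hxd : x + (τ / β) • d ∈ s) (hdesc : ⟪gradient φ x, d⟫ ≤ -ζ * ‖d‖ ^ 2)
    (hbt : tmin ≤ τ ∨ φ x + σ * (τ / β) * ⟪gradient φ x, d⟫ < φ (x + (τ / β) • d)) :
    min tmin (β * (1 - σ) * ζ / (K + 1)) ≤ τ := by
  rcases hbt with hτmin | hfail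
  · exact min_le_of_left_le hτmin
  refine min_le_of_right_le ?_
  have hlt := one_sub_mul_lt_mul_of_armijo_fails hφ hs hK hσ (div_pos hτ hβ) hx hxd hdesc hfail
  rw [div_le_iff₀ (by positivity)]
  have : (1 - σ) * ζ ≤ (K + 1) * (τ / β) := by nlinarith [div_pos hτ hβ]
  calc β * (1 - σ) * ζ ≤ β * ((K + 1) * (τ / β)) := by rw [mul_assoc]; gcongr
    _ = τ * (K + 1) := by field_simp

section RCSN

variable {φ : E → ℝ} {σ ζ : ℝ} {x d : ℕ → E} {τ : ℕ → ℝ}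

theorem rcsn_sufficient_decrease (hσ : 0 ≤ σ) (hτpos : ∀ k, 0 < τ k)
    (hdesc : ∀ k, ⟪gradient φ (x k), d k⟫ ≤ -ζ * ‖d k‖ ^ 2)
    (hls : ∀ k, φ (x k + τ k • d k) ≤ φ (x k) + σ * τ k * ⟪gradient φ (x k), d k⟫)
    (hupd : ∀ k, x (k + 1) = x k + τ k • d k) (k : ℕ) :
    φ (x (k + 1)) + σ * ζ * (‖x (k + 1) - x k‖ * ‖d k‖) ≤ φ (x k) := by
  have := mul_le_mul_of_nonneg_left (hdesc k) (mul_nonneg hσ (hτpos k).le)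
  rw [rcsn_norm_succ_sub hτpos hupd, hupd]
  linarith [hls k]

theorem rcsn_strictAnti (hσ : 0 < σ) (hζ : 0 < ζ) (hdne : ∀ k, d k ≠ 0)
    (hτpos : ∀ k, 0 < τ k) (hdesc : ∀ k, ⟪gradient φ (x k), d k⟫ ≤ -ζ * ‖d k‖ ^ 2)
    (hls : ∀ k, φ (x k + τ k • d k) ≤ φ (x k) + σ * τ k * ⟪gradient φ (x k), d k⟫)
    (hupd : ∀ k, x (k + 1) = x k + τ k • d k) : StrictAnti fun k => φ (x k) := by
  refine strictAnti_nat_of_succ_lt fun k => ?_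
  have hpos : 0 < σ * ζ * (‖x (k + 1) - x k‖ * ‖d k‖) := by
    rw [rcsn_norm_succ_sub hτpos hupd]
    have := norm_pos_iff.2 (hdne k)
    have := hτpos k
    positivity
  linarith [rcsn_sufficient_decrease hσ.le hτpos hdesc hls hupd k]

open Metric in
theorem rcsn_tendsto_norm_dir (hφ : Differentiable ℝ φ) {β tmin : ℝ} (hσ : σ < 1)
    (hβ : 0 < β) (hζ : 0 < ζ) (htmin : 0 < tmin) (hτpos : ∀ k, 0 < τ k) (hdesc : ∀ k, ⟪gradient φ (x k), d k⟫ ≤ -ζ * ‖d k‖ ^ 2)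
    (hbt : ∀ k, tmin ≤ τ k ∨
      φ (x k) + σ * (τ k / β) * ⟪gradient φ (x k), d k⟫ < φ (x k + (τ k / β) • d k))
    (hupd : ∀ k, x (k + 1) = x k + τ k • d k) {xb : E} {r : ℝ} {K : NNReal} (hr : 0 < r)
    (hK : LipschitzOnWith K (gradient φ) (closedBall xb r)) (hlim : Tendsto x atTop (𝓝 xb))
    (hstep : Tendsto (fun k => ‖x (k + 1) - x k‖) atTop (𝓝 0)) :
    Tendsto (fun k => ‖d k‖) atTop (𝓝 0) := by
  set t₀ := min tmin (β * (1 - σ) * ζ / (K + 1))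
  have ht₀ : 0 < t₀ := lt_min htmin (by have : 0 < 1 - σ := sub_pos.2 hσ; positivity)
  have hτ : ∀ᶠ k in atTop, t₀ ≤ τ k := by
    filter_upwards [hlim.eventually (closedBall_mem_nhds xb (half_pos hr)),
      (hstep.div_const β).eventually (ge_mem_nhds (by rw [zero_div]; exact half_pos hr))]
      with k hxk hk
    refine min_le_of_backtracking hφ (convex_closedBall xb r) hK hσ.le hβ (hτpos k)
      (closedBall_subset_closedBall (half_le_self hr.le) hxk) ?_ (hdesc k) (hbt k)
    have : ‖(τ k / β) • d k‖ ≤ r / 2 := by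
      rwa [norm_smul, Real.norm_of_nonneg (div_pos (hτpos k) hβ).le, div_mul_eq_mul_div,
        ← rcsn_norm_succ_sub hτpos hupd]
    rw [mem_closedBall]
    calc dist (x k + (τ k / β) • d k) xb
        ≤ dist (x k + (τ k / β) • d k) (x k) + dist (x k) xb := dist_triangle _ _ _
      _ = ‖(τ k / β) • d k‖ + dist (x k) xb := by rw [dist_self_add_left]
      _ ≤ r := by linarith
  refine squeeze_zero' (Eventually.of_forall fun k => norm_nonneg _) ?_
    (by simpa using hstep.div_const t₀)
  filter_upwards [hτ] with k hk
  rw [le_div_iff₀ ht₀, rcsn_norm_succ_sub hτpos hupd, mul_comm]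
  exact mul_le_mul_of_nonneg_right hk (norm_nonneg _)

open Metric in
theorem rcsn_exists_local_bounds {g h : E → ℝ} (hg : ContDiff ℝ 2 g) (hh : Differentiable ℝ h)
    (hhl : LocallyLipschitz (gradient h)) {ρmax : ℝ} (hρmax : 0 ≤ ρmax) {ρ : ℕ → ℝ}
    (hρk : ∀ k, ρ k ∈ Set.Icc 0 ρmax)
    (hdir : ∀ k, fderiv ℝ (gradient g) (x k) (d k) + ρ k • d k =
      -(gradient (fun y => g y - h y) (x k)))
    (xb : E) : ∃ r > 0, ∃ (K : NNReal) (C : ℝ), 0 < C ∧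
      LipschitzOnWith K (gradient fun y => g y - h y) (closedBall xb r) ∧
      ∀ k, x k ∈ closedBall xb r → ‖gradient (fun y => g y - h y) (x k)‖ ≤ C * ‖d k‖ := by
  have hg1 : ContDiff ℝ 1 (gradient g) := hg.gradient
  obtain ⟨K, t, ht, hK⟩ := hg1.locallyLipschitz.sub hhl xb
  set M := ‖fderiv ℝ (gradient g) xb‖ + 1
  have hM : ∀ᶠ y in 𝓝 xb, ‖fderiv ℝ (gradient g) y‖ < M :=
    ((hg1.continuous_fderiv one_ne_zero).norm.tendsto xb).eventually (gt_mem_nhds (lt_add_one _))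
  obtain ⟨r, hr, hrt⟩ := nhds_basis_closedBall.mem_iff.1 (inter_mem ht hM)
  refine ⟨r, hr, K, M + ρmax, by positivity, ?_, fun k hk => ?_⟩
  · rw [gradient_fun_sub (hg.differentiable two_ne_zero) hh]
    exact hK.mono fun y hy => (hrt hy).1
  · exact (norm_le_mul_of_apply_add_smul_eq_neg (hρk k) (hdir k)).trans
      (by gcongr; exact (hrt hk).2.le)

end RCSN

end InnerProductSpace

theorem rcsn_global_convergence_KL_general
    {E : Type*} [NormedAddCommGroup E] [InnerProductSpace ℝ E] [FiniteDimensional ℝ E]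
    (g h : E → ℝ) (hg : ContDiff ℝ 2 g) (hh : Differentiable ℝ h)
    (hhl : LocallyLipschitz (gradient h))
    (φ : E → ℝ) (hφ : ∀ y, φ y = g y - h y)
    (σ β ζ tmin ρmax : ℝ)
    (hσ : σ ∈ Set.Ioo (0 : ℝ) 1) (hβ : β ∈ Set.Ioo (0 : ℝ) 1)
    (hζ : 0 < ζ) (htmin : 0 < tmin) (hρmax : 0 ≤ ρmax)
    (x d : ℕ → E) (τ ρ : ℕ → ℝ)
    (hρk : ∀ k, ρ k ∈ Set.Icc 0 ρmax)
    (hdne : ∀ k, d k ≠ 0)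
    (hdir : ∀ k, fderiv ℝ (gradient g) (x k) (d k) + ρ k • d k = -(gradient φ (x k)))
    (hdesc : ∀ k, ⟪gradient φ (x k), d k⟫ ≤ -ζ * ‖d k‖ ^ 2)
    (hτpos : ∀ k, 0 < τ k)
    (hls : ∀ k, φ (x k + τ k • d k) ≤ φ (x k) + σ * τ k * ⟪gradient φ (x k), d k⟫)
    (hbt : ∀ k, tmin ≤ τ k ∨
      φ (x k) + σ * (τ k / β) * ⟪gradient φ (x k), d k⟫ < φ (x k + (τ k / β) • d k))
    (hupd : ∀ k, x (k + 1) = x k + τ k • d k)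
    (xb : E)
    (hacc : ∃ s : ℕ → ℕ, StrictMono s ∧ Tendsto (fun j => x (s j)) atTop (𝓝 xb))
    (η : ℝ) (hη : 0 < η) (ψ ψ' : ℝ → ℝ)
    (hψcont : ContinuousOn ψ (Set.Icc 0 η))
    (hψconc : ConcaveOn ℝ (Set.Icc 0 η) ψ)
    (hψ0 : ψ 0 = 0)
    (hψnonneg : ∀ t ∈ Set.Icc (0 : ℝ) η, 0 ≤ ψ t)
    (hψderiv : ∀ t ∈ Set.Ioo (0 : ℝ) η, HasDerivAt ψ (ψ' t) t ∧ 0 < ψ' t)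
    (hKL : ∀ y : E, ‖y - xb‖ ≤ η → φ xb < φ y → φ y < φ xb + η →
      1 ≤ ψ' (φ y - φ xb) * ‖gradient φ y‖) :
    Summable (fun k => ‖x (k + 1) - x k‖) ∧
    Tendsto x atTop (𝓝 xb) ∧ gradient φ xb = 0 := by
  obtain ⟨s, hs, hxs⟩ := hacc
  obtain rfl : φ = fun y => g y - h y := funext hφ
  have hgd : Differentiable ℝ g := hg.differentiable two_ne_zero
  have hgradc : Continuous (gradient fun y => g y - h y) := by
    have hg1 : ContDiff ℝ 1 (gradient g) := hg.gradient
    rw [gradient_fun_sub hgd hh]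
    exact hg1.continuous.sub hhl.continuous
  obtain ⟨r, hr, K, C, hC, hK, hwd⟩ := rcsn_exists_local_bounds hg hh hhl hρmax hρk hdir xb
  have hsum := summable_norm_succ_sub_of_KL (hgd.sub hh).continuous (mul_pos hσ.1 hζ) hC hr
    (rcsn_sufficient_decrease hσ.1.le hτpos hdesc hls hupd)
    (rcsn_strictAnti hσ.1 hζ hdne hτpos hdesc hls hupd) hwd hs hxs hη hψcont hψconc hψ0
    hψnonneg hψderiv hKL
  have hlim : Tendsto x atTop (𝓝 xb) := tendsto_nhds_of_cauchySeq_of_subseq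
    (cauchySeq_of_summable_dist (hsum.congr fun k => by rw [dist_comm, dist_eq_norm]))
    hs.tendsto_atTop hxs
  have hd := rcsn_tendsto_norm_dir (hgd.sub hh) hσ.2 hβ.1 hζ htmin hτpos hdesc hbt hupd
    hr hK hlim hsum.tendsto_atTop_zero
  have hw : Tendsto (fun k => gradient (fun y => g y - h y) (x k)) atTop (𝓝 0) := by
    refine squeeze_zero_norm' ?_ (by simpa using hd.const_mul C)
    filter_upwards [hlim.eventually (Metric.closedBall_mem_nhds xb hr)] with k hk using hwd k hk
  exact ⟨hsum, hlim, tendsto_nhds_unique ((hgradc.tendsto xb).comp hlim) hw⟩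

theorem rcsn_global_convergence_KL
    {E : Type*} [NormedAddCommGroup E] [InnerProductSpace ℝ E] [FiniteDimensional ℝ E]
    (g h : E → ℝ) (hg : ContDiff ℝ 2 g) (hh : Differentiable ℝ h)
    (hhl : LocallyLipschitz (gradient h))
    (φ : E → ℝ) (hφ : ∀ y, φ y = g y - h y)
    (σ β ζ tmin ρmax : ℝ)
    (hσ : σ ∈ Set.Ioo (0 : ℝ) 1) (hβ : β ∈ Set.Ioo (0 : ℝ) 1)
    (hζ : 0 < ζ) (htmin : 0 < tmin) (hρmax : 0 ≤ ρmax)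
    (x d : ℕ → E) (τ ρ : ℕ → ℝ)
    (hwne : ∀ k, gradient φ (x k) ≠ 0)
    (hρk : ∀ k, ρ k ∈ Set.Icc 0 ρmax)
    (hdne : ∀ k, d k ≠ 0)
    (hdir : ∀ k, fderiv ℝ (gradient g) (x k) (d k) + ρ k • d k = -(gradient φ (x k)))
    (hdesc : ∀ k, ⟪gradient φ (x k), d k⟫ ≤ -ζ * ‖d k‖ ^ 2)
    (hτpos : ∀ k, 0 < τ k)
    (hls : ∀ k, φ (x k + τ k • d k) ≤ φ (x k) + σ * τ k * ⟪gradient φ (x k), d k⟫)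
    (hbt : ∀ k, tmin ≤ τ k ∨
      φ (x k) + σ * (τ k / β) * ⟪gradient φ (x k), d k⟫ < φ (x k + (τ k / β) • d k))
    (hupd : ∀ k, x (k + 1) = x k + τ k • d k)
    (hbdd : BddBelow (Set.range φ))
    (xb : E)
    (hacc : ∃ s : ℕ → ℕ, StrictMono s ∧ Tendsto (fun j => x (s j)) atTop (𝓝 xb))
    (η : ℝ) (hη : 0 < η) (ψ ψ' : ℝ → ℝ)
    (hψcont : ContinuousOn ψ (Set.Icc 0 η))
    (hψconc : ConcaveOn ℝ (Set.Icc 0 η) ψ)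
    (hψ0 : ψ 0 = 0)
    (hψnonneg : ∀ t ∈ Set.Icc (0 : ℝ) η, 0 ≤ ψ t)
    (hψderiv : ∀ t ∈ Set.Ioo (0 : ℝ) η, HasDerivAt ψ (ψ' t) t ∧ 0 < ψ' t)
    (hKL : ∀ y : E, ‖y - xb‖ ≤ η → φ xb < φ y → φ y < φ xb + η →
      1 ≤ ψ' (φ y - φ xb) * ‖gradient φ y‖) :
    Summable (fun k => ‖x (k + 1) - x k‖) ∧
    Tendsto x atTop (𝓝 xb) ∧ gradient φ xb = 0 :=
  rcsn_global_convergence_KL_general g h hg hh hhl φ hφ σ β ζ tmin ρmax hσ hβ hζ htmin hρmax x d τ ρ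
    hρk hdne hdir hdesc hτpos hls hbt hupd xb hacc η hη ψ ψ' hψcont hψconc hψ0 hψnonneg hψderiv hKL
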